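/- The strength σ of triangles is Lipschitz continuous in vertex perturbations: if A' is obtained from a 3-point set A ⊂ ℝ² by moving each vertex by at most ε (in Euclidean norm), then |σ(A') − σ(A)| ≤ 2ε·c₂ with c₂ = 2√3. -/

import Mathlib

/-- The strength of a triangle A ⊂ ℝ² with vertices A 0, A 1, A 2:
σ(A) = (p−a)(p−b)(p−c)/p² where a,b,c are the side lengths and p the half-perimeter.
(For degenerate triangles this formula automatically gives 0; in Lean division by
zero is 0, so repeated points also yield 0.) -/
noncomputable def strength2 (A : Fin 3 → EuclideanSpace ℝ (Fin 2)) : ℝ :=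
  let a := dist (A 1) (A 2)
  let b := dist (A 0) (A 2)
  let c := dist (A 0) (A 1)
  let p := (a + b + c) / 2
  (p - a) * (p - b) * (p - c) / p ^ 2

noncomputable def fσ (x y z : ℝ) : ℝ := x * y * z / (x + y + z) ^ 2

lemma fσ_swap12 (x y z : ℝ) : fσ x y z = fσ y x z := by
  unfold fσ; rw [show x + y + z = y + x + z from by ring, show x*y*z = y*x*z from by ring]

lemma fσ_swap13 (x y z : ℝ) : fσ x y z = fσ z y x := by
  unfold fσ; rw [show x + y + z = z + y + x from by ring, show x*y*z = z*y*x from by ring]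

lemma fσ_key (x x' y z : ℝ) (hx : 0 ≤ x) (hx' : 0 ≤ x') (hy : 0 ≤ y) (hz : 0 ≤ z) :
    |fσ x' y z - fσ x y z| ≤ |x' - x| / 4 := by
  by_cases hs : y + z = 0
  · have hy0 : y = 0 := by linarith
    simp [fσ, hy0]
    positivity
  · have hs' : 0 < y + z := lt_of_le_of_ne (by linarith) (Ne.symm hs)
    have h1 : 0 < x + y + z := by linarith
    have h2 : 0 < x' + y + z := by linarith
    have heq : fσ x' y z - fσ x y z =
        y * z * (x' - x) * ((y + z) ^ 2 - x * x') / ((x' + y + z) ^ 2 * (x + y + z) ^ 2) := by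
      unfold fσ; field_simp; ring
    have hD : 0 < (x' + y + z) ^ 2 * (x + y + z) ^ 2 := mul_pos (pow_pos h2 2) (pow_pos h1 2)
    rw [heq, abs_div, abs_of_pos hD]
    rw [div_le_div_iff₀ hD (by norm_num : (0:ℝ) < 4)]
    have habs : |y * z * (x' - x) * ((y + z) ^ 2 - x * x')| =
        y * z * |x' - x| * |(y + z) ^ 2 - x * x'| := by
      rw [abs_mul, abs_mul, abs_of_nonneg (mul_nonneg hy hz)]
    rw [habs]
    have hkey : y * z * |(y + z) ^ 2 - x * x'| * 4 ≤ (x' + y + z) ^ 2 * (x + y + z) ^ 2 := by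
      have hles : (y + z)^2 ≤ (x + y + z) * (x' + y + z) := by nlinarith
      have hlex : x * x' ≤ (x + y + z) * (x' + y + z) := by nlinarith
      have h4yz : 4 * (y * z) ≤ (y + z)^2 := by nlinarith [sq_nonneg (y - z)]
      have hprod : ((x + y + z) * (x' + y + z)) * ((x + y + z) * (x' + y + z))
          = (x' + y + z) ^ 2 * (x + y + z) ^ 2 := by ring
      rcases abs_cases ((y + z) ^ 2 - x * x') with ⟨h, hsgn⟩ | ⟨h, hsgn⟩ <;> rw [h]
      · calc y * z * ((y + z) ^ 2 - x * x') * 4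
            ≤ (y + z) ^ 2 * ((y + z) ^ 2 - x * x') := by
              have h5 := mul_le_mul_of_nonneg_right h4yz hsgn
              linarith
          _ ≤ (y + z) ^ 2 * (y + z) ^ 2 := by
              have h5 := mul_nonneg (sq_nonneg (y + z)) (mul_nonneg hx hx')
              nlinarith [h5]
          _ ≤ ((x + y + z) * (x' + y + z)) * ((x + y + z) * (x' + y + z)) :=
              mul_le_mul hles hles (sq_nonneg _) (le_of_lt (mul_pos h1 h2))
          _ = (x' + y + z) ^ 2 * (x + y + z) ^ 2 := hprod
      · calc y * z * -((y + z) ^ 2 - x * x') * 4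
            ≤ (y + z) ^ 2 * (x * x' - (y + z) ^ 2) := by
              have h5 := mul_le_mul_of_nonneg_right h4yz (by linarith : (0:ℝ) ≤ x * x' - (y + z) ^ 2)
              linarith
          _ ≤ (y + z) ^ 2 * (x * x') := by
              have h5 := mul_nonneg (sq_nonneg (y + z)) (sq_nonneg (y + z))
              nlinarith [h5]
          _ ≤ ((x + y + z) * (x' + y + z)) * ((x + y + z) * (x' + y + z)) :=
              mul_le_mul hles hlex (mul_nonneg hx hx') (le_of_lt (mul_pos h1 h2))
          _ = (x' + y + z) ^ 2 * (x + y + z) ^ 2 := hprod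
    calc y * z * |x' - x| * |(y + z) ^ 2 - x * x'| * 4
        = |x' - x| * (y * z * |(y + z) ^ 2 - x * x'| * 4) := by ring
      _ ≤ |x' - x| * ((x' + y + z) ^ 2 * (x + y + z) ^ 2) :=
          mul_le_mul_of_nonneg_left hkey (abs_nonneg _)


/-- Lipschitz continuity of the strength of triangles: if A' is obtained from a
3-point set A ⊂ ℝ² by moving each vertex by at most ε (in Euclidean norm), then
|σ(A') − σ(A)| ≤ 2ε·c₂ with c₂ = 2√3. -/
theorem stmt15 (ε : ℝ) (A A' : Fin 3 → EuclideanSpace ℝ (Fin 2))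
    (hpert : ∀ i, dist (A i) (A' i) ≤ ε) :
    |strength2 A' - strength2 A| ≤ 2 * ε * (2 * Real.sqrt 3) := by
  have hε : 0 ≤ ε := le_trans dist_nonneg (hpert 0)
  set a := dist (A 1) (A 2) with ha
  set b := dist (A 0) (A 2) with hb
  set c := dist (A 0) (A 1) with hc
  set a' := dist (A' 1) (A' 2) with ha'
  set b' := dist (A' 0) (A' 2) with hb'
  set c' := dist (A' 0) (A' 1) with hc'
  set x := (b + c - a) / 2
  set y := (a + c - b) / 2
  set z := (a + b - c) / 2
  set x' := (b' + c' - a') / 2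
  set y' := (a' + c' - b') / 2
  set z' := (a' + b' - c') / 2
  have hSA : strength2 A = fσ x y z := by
    simp only [strength2, fσ, x, y, z, a, b, c]; ring_nf
  have hSA' : strength2 A' = fσ x' y' z' := by
    simp only [strength2, fσ, x', y', z', a', b', c']; ring_nf
  have hx : 0 ≤ x := by
    have := dist_triangle (A 1) (A 0) (A 2)
    simp only [dist_comm (A 1) (A 0)] at this
    simp only [x]; linarith
  have hy : 0 ≤ y := by
    have := dist_triangle (A 0) (A 1) (A 2)
    simp only [y]; linarith
  have hz : 0 ≤ z := by
    have := dist_triangle (A 0) (A 2) (A 1)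
    simp only [dist_comm (A 2) (A 1)] at this
    simp only [z]; linarith
  have hx' : 0 ≤ x' := by
    have := dist_triangle (A' 1) (A' 0) (A' 2)
    simp only [dist_comm (A' 1) (A' 0)] at this
    simp only [x']; linarith
  have hy' : 0 ≤ y' := by
    have := dist_triangle (A' 0) (A' 1) (A' 2)
    simp only [y']; linarith
  have hz' : 0 ≤ z' := by
    have := dist_triangle (A' 0) (A' 2) (A' 1)
    simp only [dist_comm (A' 2) (A' 1)] at this
    simp only [z']; linarith
  have hda : |a' - a| ≤ 2 * ε := by
    have h := dist_dist_dist_le (A' 1) (A' 2) (A 1) (A 2)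
    rw [Real.dist_eq] at h
    have h1 := hpert 1; have h2 := hpert 2
    rw [dist_comm (A 1) (A' 1)] at h1; rw [dist_comm (A 2) (A' 2)] at h2
    linarith
  have hdb : |b' - b| ≤ 2 * ε := by
    have h := dist_dist_dist_le (A' 0) (A' 2) (A 0) (A 2)
    rw [Real.dist_eq] at h
    have h0 := hpert 0; have h2 := hpert 2
    rw [dist_comm (A 0) (A' 0)] at h0; rw [dist_comm (A 2) (A' 2)] at h2
    linarith
  have hdc : |c' - c| ≤ 2 * ε := by
    have h := dist_dist_dist_le (A' 0) (A' 1) (A 0) (A 1)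
    rw [Real.dist_eq] at h
    have h0 := hpert 0; have h1 := hpert 1
    rw [dist_comm (A 0) (A' 0)] at h0; rw [dist_comm (A 1) (A' 1)] at h1
    linarith
  obtain ⟨hda1, hda2⟩ := abs_le.mp hda
  obtain ⟨hdb1, hdb2⟩ := abs_le.mp hdb
  obtain ⟨hdc1, hdc2⟩ := abs_le.mp hdc
  have hdx : |x' - x| ≤ 3 * ε := abs_le.mpr ⟨by simp only [x, x']; linarith, by simp only [x, x']; linarith⟩
  have hdy : |y' - y| ≤ 3 * ε := abs_le.mpr ⟨by simp only [y, y']; linarith, by simp only [y, y']; linarith⟩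
  have hdz : |z' - z| ≤ 3 * ε := abs_le.mpr ⟨by simp only [z, z']; linarith, by simp only [z, z']; linarith⟩
  rw [hSA, hSA']
  have t1 : |fσ x' y' z' - fσ x y' z'| ≤ |x' - x| / 4 := fσ_key x x' y' z' hx hx' hy' hz'
  have t2 : |fσ x y' z' - fσ x y z'| ≤ |y' - y| / 4 := by
    rw [fσ_swap12 x y' z', fσ_swap12 x y z']
    exact fσ_key y y' x z' hy hy' hx hz'
  have t3 : |fσ x y z' - fσ x y z| ≤ |z' - z| / 4 := by
    rw [fσ_swap13 x y z', fσ_swap13 x y z]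
    exact fσ_key z z' y x hz hz' hy hx
  have htri : |fσ x' y' z' - fσ x y z| ≤
      |fσ x' y' z' - fσ x y' z'| + |fσ x y' z' - fσ x y z'| + |fσ x y z' - fσ x y z| := by
    calc |fσ x' y' z' - fσ x y z| ≤ |fσ x' y' z' - fσ x y z'| + |fσ x y z' - fσ x y z| :=
          abs_sub_le _ _ _
      _ ≤ (|fσ x' y' z' - fσ x y' z'| + |fσ x y' z' - fσ x y z'|) + |fσ x y z' - fσ x y z| := by
          gcongr; exact abs_sub_le _ _ _
  have hsqrt : (1:ℝ) ≤ Real.sqrt 3 := by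
    rw [show (1:ℝ) = Real.sqrt 1 from Real.sqrt_one.symm]
    exact Real.sqrt_le_sqrt (by norm_num)
  nlinarith [htri, t1, t2, t3, hdx, hdy, hdz]
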